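/- Let (X, ω) be a symplectic vector space and W₀ an isotropic subspace. A linear subspace λ ⊇ W₀ is Lagrangian in X if and only if W₀^{ωω} ⊆ λ ⊆ W₀^ω and the symplectic reduction R_{W₀^ω}(λ) = λ/W₀^{ωω} is a Lagrangian subspace of the reduced symplectic space W₀^ω/W₀^{ωω}. -/
import Mathlib


universe u

/-- The annihilator `λ^ω = {y ∈ X : ω(x,y) = 0 for all x ∈ λ}` of a subspace of a
complex vector space with a sesquilinear form `ω` (linear in the first,
conjugate-linear in the second variable). -/
noncomputable def ann {X : Type*} [AddCommGroup X] [Module ℂ X]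
    (ω : X →ₗ[ℂ] X →ₗ⋆[ℂ] ℂ) (l : Submodule ℂ X) : Submodule ℂ X :=
  ⨅ x ∈ l, LinearMap.ker (ω x)


lemma mem_ann_iff {X : Type*} [AddCommGroup X] [Module ℂ X]
    (ω : X →ₗ[ℂ] X →ₗ⋆[ℂ] ℂ) (l : Submodule ℂ X) (y : X) :
    y ∈ ann ω l ↔ ∀ x ∈ l, ω x y = 0 := by
  simp [ann, Submodule.mem_iInf, LinearMap.mem_ker]

lemma ann_antitone {X : Type*} [AddCommGroup X] [Module ℂ X]
    (ω : X →ₗ[ℂ] X →ₗ⋆[ℂ] ℂ) {a b : Submodule ℂ X} (h : a ≤ b) :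
    ann ω b ≤ ann ω a := fun y hy => (mem_ann_iff ω a y).2
    fun x hx => (mem_ann_iff ω b y).1 hy x (h hx)

lemma le_ann_ann {X : Type*} [AddCommGroup X] [Module ℂ X]
    (ω : X →ₗ[ℂ] X →ₗ⋆[ℂ] ℂ)
    (hskew : ∀ x y, ω y x = - (starRingEnd ℂ) (ω x y))
    (l : Submodule ℂ X) : l ≤ ann ω (ann ω l) := by
  intro x hx
  rw [mem_ann_iff]
  intro y hy
  rw [hskew, (mem_ann_iff ω l y).1 hy x hx, map_zero, neg_zero]

/-- Let `W₀` be isotropic and `λ ⊇ W₀`. Then `λ` is Lagrangian in `X`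
iff `W₀^{ωω} ⊆ λ ⊆ W₀^ω` and the symplectic reduction `R_{W₀^ω}(λ) = λ/W₀^{ωω}` is
Lagrangian in the reduced space `W₀^ω/W₀^{ωω}`; the latter condition is expressed
equivalently upstairs as `λ = λ^ω ∩ W₀^ω` (its annihilator in the reduced space is
`(λ^ω ∩ W₀^ω)/W₀^{ωω}`). -/
theorem lagrangian_iff_reduced_lagrangian {X : Type*} [AddCommGroup X] [Module ℂ X]
    (ω : X →ₗ[ℂ] X →ₗ⋆[ℂ] ℂ)
    (hskew : ∀ x y, ω y x = - (starRingEnd ℂ) (ω x y))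
    (hnd : ∀ x, (∀ y, ω x y = 0) → x = 0)
    (W₀ l : Submodule ℂ X)
    (hiso : W₀ ≤ ann ω W₀) (hW₀l : W₀ ≤ l) :
    l = ann ω l ↔
      (ann ω (ann ω W₀) ≤ l ∧ l ≤ ann ω W₀ ∧ l = ann ω l ⊓ ann ω W₀) := by

  constructor
  · intro h
    have h1 : ann ω l ≤ ann ω W₀ := ann_antitone ω hW₀l
    refine ⟨?_, h ▸ h1, ?_⟩
    · calc ann ω (ann ω W₀) ≤ ann ω (ann ω l) := ann_antitone ω h1
        _ = ann ω l := by conv_lhs => rw [← h]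
        _ = l := h.symm
    · rw [← h]; exact (inf_of_le_left (le_trans h.le h1)).symm
  · rintro ⟨h1, h2, h3⟩
    have key : ann ω l ≤ ann ω W₀ := by
      calc ann ω l ≤ ann ω (ann ω (ann ω W₀)) := ann_antitone ω h1
        _ ≤ ann ω W₀ := ann_antitone ω (le_ann_ann ω hskew W₀)
    conv_lhs => rw [h3]
    exact inf_of_le_left key
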